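/- For all variables x₁, x₂, x₃, every context Γ and every term M in Λ↑, one has {x₁x₂}_Γ ({x₂x₃}_Γ M) = {x₁x₃}_Γ M. -/
import Mathlib


/-- Terms of Λ↑: variables, application, named abstraction, explicit weakening. -/
inductive Tm : Type
  | var : ℕ → Tm
  | app : Tm → Tm → Tm
  | lam : ℕ → Tm → Tm
  | up  : Tm → Tm

/-- Renaming functions: `swap y x` is `{yx}`, `lift F x` is `F_x`. -/
inductive Ren : Type
  | swap : ℕ → ℕ → Ren
  | lift : Ren → ℕ → Ren

/-- Action of a renaming function on a term. -/
def Ren.apply : Ren → Tm → Tm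
  | F, .app M N => .app (F.apply M) (F.apply N)
  | F, .lam x M => .lam x ((F.lift x).apply M)
  | .lift F _, .up M => .up (F.apply M)
  | .lift F x, .var z => if z = x then .var x else .up (F.apply (.var z))
  | .swap _ _, .up M => .up M
  | .swap y x, .var z => if z = x then .var y else .up (.var z)
termination_by F M => (sizeOf M, sizeOf F)

/-- Iterated lifting `F_Γ` for a context `Γ = y₁,…,yₙ` (the list `[y₁,…,yₙ]`):
lift by `y₁` first, then `y₂`, …, then `yₙ`. -/
def Ren.liftCtx (F : Ren) (Γ : List ℕ) : Ren := Γ.foldl Ren.lift F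

/-- Alpha-conversion: smallest compatible equivalence with `λx M =α λy {yx}M`. -/
inductive Alpha : Tm → Tm → Prop
  | refl (M) : Alpha M M
  | symm {M N} : Alpha M N → Alpha N M
  | trans {M N P} : Alpha M N → Alpha N P → Alpha M P
  | app {M₁ M₂ N₁ N₂} : Alpha M₁ M₂ → Alpha N₁ N₂ → Alpha (.app M₁ N₁) (.app M₂ N₂)
  | lam {M₁ M₂} (x) : Alpha M₁ M₂ → Alpha (.lam x M₁) (.lam x M₂)
  | up {M₁ M₂} : Alpha M₁ M₂ → Alpha (.up M₁) (.up M₂)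
  | rename (x y M) : Alpha (.lam x M) (.lam y ((Ren.swap y x).apply M))

/-- de Bruijn normalisation `db_z : Λ↑ → Λ↑`. -/
def db (z : ℕ) : Tm → Tm
  | .var x => .var x
  | .up M => .up (db z M)
  | .app M N => .app (db z M) (db z N)
  | .lam x M => .lam z ((Ren.swap z x).apply (db z M))
/-- Derivations of judgments `Γ ⊢ M`.  A context `Γ = y₁,…,yₙ` is the list
`[y₁,…,yₙ]` and `Γ,x` is `Γ ++ [x]`. -/
inductive Der : List ℕ → Tm → Type
  | varNil (x : ℕ) : Der [] (.var x)
  | varHere (Γ : List ℕ) (x : ℕ) : Der (Γ ++ [x]) (.var x)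
  | varThere {Γ : List ℕ} {x : ℕ} (z : ℕ) : z ≠ x → Der Γ (.var x) → Der (Γ ++ [z]) (.var x)
  | app {Γ M N} : Der Γ M → Der Γ N → Der Γ (.app M N)
  | upNil {M} : Der [] M → Der [] (.up M)
  | upCons {Γ M} (x : ℕ) : Der Γ M → Der (Γ ++ [x]) (.up M)
  | lam {Γ M} (x : ℕ) : Der (Γ ++ [x]) M → Der Γ (.lam x M)

/-- Generalized de Bruijn terms. -/
inductive Db : Type
  | var : ℕ → Db
  | one : Db
  | app : Db → Db → Db
  | lam : Db → Db
  | up  : Db → Db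

/-- Auxiliary translation, with the context given in *reversed* order
(head of the list is the last variable of the context). -/
def transAux : List ℕ → Tm → Db
  | Γ, .app M N => .app (transAux Γ M) (transAux Γ N)
  | Γ, .lam x M => .lam (transAux (x :: Γ) M)
  | [], .var x => .var x
  | y :: Γ, .var x => if y = x then .one else .up (transAux Γ (.var x))
  | [], .up M => .up (transAux [] M)
  | _ :: Γ, .up M => .up (transAux Γ M)
termination_by Γ M => (sizeOf M, Γ.length)

/-- The translation `‖Γ ⊢ M‖`, with `Γ = y₁,…,yₙ` given as the list `[y₁,…,yₙ]`. -/
def transl (Γ : List ℕ) (M : Tm) : Db := transAux Γ.reverse M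

/-- The map `db_z` from generalized de Bruijn terms back to `Λ↑`. -/
def dbD (z : ℕ) : Db → Tm
  | .var x => .var x
  | .one => .var z
  | .lam A => .lam z (dbD z A)
  | .app A B => .app (dbD z A) (dbD z B)
  | .up A => .up (dbD z A)

/-- The function `{z/Γ}`, with `Γ = y₁,…,yₙ` given as the list `[y₁,…,yₙ]`:
`{z/nil}M = M` and `{z/x,Δ}M = {z/Δ}({zx}_Δ M)`. -/
def subAll (z : ℕ) : List ℕ → Tm → Tm
  | [], M => M
  | x :: Δ, M => subAll z Δ (((Ren.swap z x).liftCtx Δ).apply M)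


theorem Ren.liftCtx_append (F : Ren) (Γ : List ℕ) (y : ℕ) :
    F.liftCtx (Γ ++ [y]) = (F.liftCtx Γ).lift y := by
  simp [Ren.liftCtx, List.foldl_append]

@[simp] theorem Ren.apply_app (F : Ren) (M N : Tm) :
    F.apply (.app M N) = .app (F.apply M) (F.apply N) := by
  cases F <;> simp [Ren.apply]

@[simp] theorem Ren.apply_lam (F : Ren) (x : ℕ) (M : Tm) :
    F.apply (.lam x M) = .lam x ((F.lift x).apply M) := by
  cases F <;> simp [Ren.apply]

@[simp] theorem Ren.lift_up (F : Ren) (x : ℕ) (M : Tm) :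
    (F.lift x).apply (.up M) = .up (F.apply M) := by simp [Ren.apply]

@[simp] theorem Ren.lift_var (F : Ren) (x z : ℕ) :
    (F.lift x).apply (.var z) = if z = x then .var x else .up (F.apply (.var z)) := by simp [Ren.apply]

@[simp] theorem Ren.swap_up (y x : ℕ) (M : Tm) :
    (Ren.swap y x).apply (.up M) = .up M := by simp [Ren.apply]

@[simp] theorem Ren.swap_var (y x z : ℕ) :
    (Ren.swap y x).apply (.var z) = if z = x then .var y else .up (.var z) := by simp [Ren.apply]

/-- `{x₁x₂}_Γ ({x₂x₃}_Γ M) = {x₁x₃}_Γ M`. -/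
theorem stmt1 (x₁ x₂ x₃ : ℕ) (Γ : List ℕ) (M : Tm) :
    ((Ren.swap x₁ x₂).liftCtx Γ).apply (((Ren.swap x₂ x₃).liftCtx Γ).apply M)
      = ((Ren.swap x₁ x₃).liftCtx Γ).apply M := by
  induction M generalizing Γ with
  | var z =>
    induction Γ using List.reverseRecOn with
    | nil =>
      simp only [Ren.liftCtx, List.foldl_nil, Ren.swap_var]
      by_cases h : z = x₃ <;> simp [h]
    | append_singleton Γ y ih =>
      simp only [Ren.liftCtx_append, Ren.lift_var]
      by_cases h : z = y <;> simp [h, ih]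
  | app M N ihM ihN => simp [ihM, ihN]
  | lam x M ih =>
    simp only [Ren.apply_lam, ← Ren.liftCtx_append, ih]
  | up M ih =>
    induction Γ using List.reverseRecOn with
    | nil => simp [Ren.liftCtx]
    | append_singleton Γ y _ =>
      simp [Ren.liftCtx_append, ih]
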